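/- arXiv:1102.0969 — 3 statements merged into one kernel-verified Lean document; each statement's English description precedes it below -/
import Mathlib

section
/- For any partition S of the vertex set of a finite graph G into k parts, the modularity M(S) = Σ_i (m_i/m − (D_i/(2m))²) is at most 1 − 1/k, where m is the number of edges, m_i the number of edges inside part i, and D_i the sum of degrees of vertices in part i. -/
/-!
Put `x_C = D_C / (2m)`. The `x_C` sum to `1`, so `∑ x_C² ≥ 1/k` by Cauchy–Schwarz; and the
ordered adjacent pairs inside the parts are at most all `2m` of them, so the edge terms sum to
at most `1`.
-/

open Finset

theorem Finpartition.sum_sum_parts {α M : Type*} [DecidableEq α] [AddCommMonoid M]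
    {s : Finset α} (P : Finpartition s) (f : α → M) :
    ∑ C ∈ P.parts, ∑ a ∈ C, f a = ∑ a ∈ s, f a := by
  simpa [P.biUnion_parts] using (sum_biUnion P.supIndep.pairwiseDisjoint (f := f)).symm

theorem one_div_card_le_sum_sq {ι α : Type*} [Field α] [LinearOrder α] [IsStrictOrderedRing α]
    {s : Finset ι} {f : ι → α} (hf : ∑ i ∈ s, f i = 1) :
    1 / (#s : α) ≤ ∑ i ∈ s, f i ^ 2 := by
  have h := sq_sum_le_card_mul_sum_sq (s := s) (f := f)
  rw [hf, one_pow, mul_comm] at h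
  exact div_le_of_le_mul₀ (Nat.cast_nonneg _) (sum_nonneg fun i _ => sq_nonneg _) h

namespace SimpleGraph

variable {V : Type*} [Fintype V] (G : SimpleGraph V) [DecidableRel G.Adj]

theorem sum_ite_adj_le_degree (s : Finset V) (u : V) :
    ∑ v ∈ s, (if G.Adj u v then (1 : ℝ) else 0) ≤ G.degree u := by
  rw [sum_boole, ← card_neighborFinset_eq_degree]
  exact_mod_cast card_le_card fun v hv => by simpa using (mem_filter.1 hv).2

theorem sum_parts_sum_degree [DecidableEq V] (P : Finpartition (univ : Finset V)) :
    ∑ C ∈ P.parts, ∑ v ∈ C, (G.degree v : ℝ) = 2 * #G.edgeFinset := by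
  rw [P.sum_sum_parts]
  exact_mod_cast G.sum_degrees_eq_twice_card_edges

theorem sum_parts_sum_ite_adj_le [DecidableEq V] (P : Finpartition (univ : Finset V)) :
    ∑ C ∈ P.parts, ∑ u ∈ C, ∑ v ∈ C, (if G.Adj u v then (1 : ℝ) else 0)
      ≤ 2 * #G.edgeFinset :=
  calc _ ≤ ∑ C ∈ P.parts, ∑ u ∈ C, (G.degree u : ℝ) := by
        gcongr with C _ u _
        exact G.sum_ite_adj_le_degree C u
    _ = 2 * #G.edgeFinset := G.sum_parts_sum_degree P

end SimpleGraph

theorem modularity_le_one_sub_inv_card_general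
    {V : Type*} [Fintype V] [DecidableEq V] (G : SimpleGraph V) [DecidableRel G.Adj]
    (m : ℝ) (hm : m = (G.edgeFinset.card : ℝ)) (hm0 : 0 < m)
    (P : Finpartition (Finset.univ : Finset V))
    (k : ℕ) (hk : k = P.parts.card) :
    ∑ C ∈ P.parts,
        ((∑ u ∈ C, ∑ v ∈ C, (if G.Adj u v then (1 : ℝ) else 0)) / 2 / m
          - ((∑ v ∈ C, (G.degree v : ℝ)) / (2 * m)) ^ 2)
      ≤ 1 - 1 / (k : ℝ) := by
  have h_intra : ∑ C ∈ P.parts,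
      (∑ u ∈ C, ∑ v ∈ C, (if G.Adj u v then (1 : ℝ) else 0)) / 2 / m ≤ 1 := by
    simp only [div_div]
    rw [← sum_div]
    exact div_le_one_of_le₀ (hm ▸ G.sum_parts_sum_ite_adj_le P) (by positivity)
  have h_degree : ∑ C ∈ P.parts, (∑ v ∈ C, (G.degree v : ℝ)) / (2 * m) = 1 := by
    rw [← sum_div, G.sum_parts_sum_degree P, ← hm, div_self (by positivity)]
  have h_sq := one_div_card_le_sum_sq h_degree
  rw [sum_sub_distrib, hk]
  linarith

/-- For any partition `P` of the vertex set of a finite graph `G` into `k` parts,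
the modularity `∑_i (m_i/m − (D_i/(2m))²)` is at most `1 − 1/k`, where `m` is the
number of edges, `m_i` the number of edges inside part `i` (counted via ordered
pairs, divided by 2) and `D_i` the sum of degrees of vertices in part `i`. -/
theorem modularity_le_one_sub_inv_card
    {V : Type*} [Fintype V] [DecidableEq V] (G : SimpleGraph V) [DecidableRel G.Adj]
    (m : ℝ) (hm : m = (G.edgeFinset.card : ℝ)) (hm0 : 0 < m)
    (P : Finpartition (Finset.univ : Finset V))
    (k : ℕ) (hk : k = P.parts.card) (hk0 : 0 < k) :
    ∑ C ∈ P.parts,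
        ((∑ u ∈ C, ∑ v ∈ C, (if G.Adj u v then (1 : ℝ) else 0)) / 2 / m
          - ((∑ v ∈ C, (G.degree v : ℝ)) / (2 * m)) ^ 2)
      ≤ 1 - 1 / (k : ℝ) :=
  modularity_le_one_sub_inv_card_general G m hm hm0 P k hk
end

section
/- For any partition S of the vertices of a graph and any k ≥ 1, there exists a partition S' into at most k parts (obtained by merging parts of S) with modularity M(S') ≥ (1 − 1/k)·M(S). Consequently OPT_k ≥ (1 − 1/k)·OPT, where OPT_k is the maximum modularity over partitions into at most k parts. -/
/-!
Merge the parts of `S` uniformly at random into `k` superclusters, i.e. compose the coloring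
with a uniformly random `g : I → Fin k`. Up to the factor `1/2m`, modularity is a sum of weights
`w(u,v) = a_{uv} - d_u d_v / 2m` over the pairs inside one part, and these weights sum to zero
over all pairs. A pair already inside one part of `S` stays inside one, and any other pair
ends up inside one with probability `1/k`; so the expected modularity is
`(1/k) · 0 + (1 - 1/k) · M(S)`, and some `g` does at least as well as the expectation.
-/

open Finset

/-- Modularity of the partition of `V` given by the fibers of the coloring `c`:
`M(c) = (1/(2m)) ∑_{u,v : c u = c v} (a_{u,v} − d_u d_v/(2m))`. -/
noncomputable def colMod {V : Type*} [Fintype V] [DecidableEq V]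
    (G : SimpleGraph V) [DecidableRel G.Adj]
    {I : Type*} [DecidableEq I] (c : V → I) : ℝ :=
  (1 / (2 * (G.edgeFinset.card : ℝ))) *
    ∑ u, ∑ v,
      if c u = c v then
        ((if G.Adj u v then (1 : ℝ) else 0)
          - (G.degree u : ℝ) * (G.degree v : ℝ) / (2 * (G.edgeFinset.card : ℝ)))
      else 0

section RandomMerge

variable {V I β : Type*} [Fintype V] [DecidableEq I] [Fintype β] [DecidableEq β]

theorem card_mul_card_filter_apply_eq_apply [Fintype I] {i j : I} (hij : i ≠ j) :
    Fintype.card β * #{g : I → β | g i = g j} = Fintype.card (I → β) := by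
  have hsplit : #{g : I → β | g i = g j} = Fintype.card ({x // x ≠ i} → β) := by
    rw [card_filter, ← (Equiv.funSplitAt i β).symm.sum_comp, Fintype.sum_prod_type, sum_comm]
    simp [Equiv.funSplitAt_symm_apply, hij.symm]
  rw [hsplit, Fintype.card_congr (Equiv.funSplitAt i β), Fintype.card_prod]

theorem card_mul_sum_ite_apply_eq_apply [Fintype I] (i j : I) (x : ℝ) :
    Fintype.card β * ∑ g : I → β, (if g i = g j then x else 0)
      = Fintype.card (I → β) * (x + (Fintype.card β - 1) * if i = j then x else 0) := by
  by_cases hij : i = j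
  · subst hij
    simp only [if_true, sum_const, card_univ, nsmul_eq_mul]
    ring
  · have hcount := card_mul_card_filter_apply_eq_apply (β := β) hij
    rw [← sum_filter, sum_const, nsmul_eq_mul, if_neg hij, ← mul_assoc, ← Nat.cast_mul, hcount]
    ring

def intraClusterSum (w : V → V → ℝ) (c : V → I) : ℝ :=
  ∑ u, ∑ v, if c u = c v then w u v else 0

theorem card_mul_sum_intraClusterSum_comp [Fintype I] (w : V → V → ℝ) (c : V → I) :
    Fintype.card β * ∑ g : I → β, intraClusterSum w (g ∘ c)
      = Fintype.card (I → β)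
          * (∑ u, ∑ v, w u v + (Fintype.card β - 1) * intraClusterSum w c) := by
  have hswap : ∑ g : I → β, intraClusterSum w (g ∘ c)
      = ∑ u, ∑ v, ∑ g : I → β, if g (c u) = g (c v) then w u v else 0 := by
    simp only [intraClusterSum, Function.comp_apply]
    rw [sum_comm]
    exact sum_congr rfl fun u _ => sum_comm
  rw [hswap]
  simp only [intraClusterSum, mul_sum (s := (univ : Finset V)), card_mul_sum_ite_apply_eq_apply,
    mul_add, sum_add_distrib]

theorem exists_intraClusterSum_comp_ge [Fintype I] [Nonempty β] {w : V → V → ℝ}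
    (hw : ∑ u, ∑ v, w u v = 0) (c : V → I) :
    ∃ g : I → β, (1 - 1 / Fintype.card β) * intraClusterSum w c ≤ intraClusterSum w (g ∘ c) := by
  have hβ : (Fintype.card β : ℝ) ≠ 0 := by positivity
  have havg : ∑ g : I → β, intraClusterSum w (g ∘ c)
      = ∑ _g : I → β, (1 - 1 / Fintype.card β) * intraClusterSum w c := by
    have h := card_mul_sum_intraClusterSum_comp (β := β) w c
    rw [hw, zero_add] at h
    rw [sum_const, card_univ, nsmul_eq_mul]
    field_simp
    linarith
  obtain ⟨g, -, hg⟩ := exists_le_of_sum_le univ_nonempty havg.ge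
  exact ⟨g, hg⟩

end RandomMerge

section Modularity

variable {V : Type*} [Fintype V] (G : SimpleGraph V) [DecidableRel G.Adj]

noncomputable def modularityWeight (u v : V) : ℝ :=
  (if G.Adj u v then 1 else 0)
    - (G.degree u : ℝ) * (G.degree v : ℝ) / (2 * (G.edgeFinset.card : ℝ))

theorem colMod_eq_intraClusterSum [DecidableEq V] {I : Type*} [DecidableEq I] (c : V → I) :
    colMod G c = 1 / (2 * (G.edgeFinset.card : ℝ)) * intraClusterSum (modularityWeight G) c :=
  rfl

-- The identity `(2m)² / 2m = 2m` behind this also holds for `m = 0`, as `0 / 0 = 0`.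
theorem sum_modularityWeight : ∑ u, ∑ v, modularityWeight G u v = 0 := by
  have hdeg : ∑ u, (G.degree u : ℝ) = 2 * (G.edgeFinset.card : ℝ) := by
    exact_mod_cast G.sum_degrees_eq_twice_card_edges
  have hrow : ∀ u, ∑ v, (if G.Adj u v then (1 : ℝ) else 0) = G.degree u := by
    intro u
    classical
    simp [sum_boole, SimpleGraph.degree, SimpleGraph.neighborFinset_eq_filter]
  simp only [modularityWeight, sum_sub_distrib, hrow, ← sum_div, ← mul_sum, ← sum_mul, hdeg,
    mul_self_div_self, sub_self]

end Modularity

theorem merge_into_k_clusters_general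
    {V : Type*} [Fintype V] [DecidableEq V] (G : SimpleGraph V) [DecidableRel G.Adj]
    {I : Type*} [Fintype I] [DecidableEq I] (c : V → I)
    (k : ℕ) (hk : 1 ≤ k) :
    ∃ g : I → Fin k, (1 - 1 / (k : ℝ)) * colMod G c ≤ colMod G (g ∘ c) := by
  have : Nonempty (Fin k) := Fin.pos_iff_nonempty.mp hk
  obtain ⟨g, hg⟩ := exists_intraClusterSum_comp_ge (β := Fin k) (sum_modularityWeight G) c
  rw [Fintype.card_fin] at hg
  refine ⟨g, ?_⟩
  rw [colMod_eq_intraClusterSum, colMod_eq_intraClusterSum, mul_left_comm]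
  exact mul_le_mul_of_nonneg_left hg (by positivity)

/-- For any partition `S` of the vertices of a graph (given as the fibers of a
coloring `c : V → I`) and any `k ≥ 1`, there exists a partition into at most `k`
parts, obtained by merging parts of `S` (i.e. given by `g ∘ c` for some
`g : I → Fin k`), whose modularity is at least `(1 − 1/k)` times that of `S`.
Consequently `OPT_k ≥ (1 − 1/k)·OPT`. -/
theorem merge_into_k_clusters
    {V : Type*} [Fintype V] [DecidableEq V] (G : SimpleGraph V) [DecidableRel G.Adj]
    (hm0 : 0 < G.edgeFinset.card)
    {I : Type*} [Fintype I] [DecidableEq I] (c : V → I)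
    (k : ℕ) (hk : 1 ≤ k) :
    ∃ g : I → Fin k, (1 - 1 / (k : ℝ)) * colMod G c ≤ colMod G (g ∘ c) :=
  merge_into_k_clusters_general G c k hk
end

section
/- Let G be an (n−4)-regular graph on n vertices, V' ⊆ V with |V'| = tn, and suppose the largest clique in the induced subgraph G[V'] has αn vertices. Then M(V') ≤ (4t² + 2α − 3t)/(n−4). -/
/-!
Among the `k²` ordered pairs of vertices of `V'` (`k = |V'|`), the `k` diagonal pairs are not
edges. By maximality of the clique `S`, every `u ∈ V' \ S` has a non-neighbour `s ∈ S`, which gives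
two more non-adjacent pairs `(u, s)` and `(s, u)`; all these `k + 2(k - |S|)` pairs are distinct.
Hence `2 m_{V'} ≤ k² - 3k + 2|S|`. Regularity gives `2m = n(n - 4)` and `D_{V'} = k(n - 4)`, so
`D_{V'}/(2m) = t`, and the bound is this inequality rearranged.
-/

open Finset

namespace SimpleGraph

variable {V : Type*} {G : SimpleGraph V}

lemma IsClique.exists_not_adj_of_forall_card_le {U S : Finset V} (hSU : S ⊆ U)
    (hS : G.IsClique (S : Set V)) (hmax : ∀ T ⊆ U, G.IsClique (T : Set V) → #T ≤ #S)
    {u : V} (huU : u ∈ U) (huS : u ∉ S) : ∃ s ∈ S, ¬ G.Adj u s := by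
  by_contra! hadj
  have hclique : G.IsClique (S.cons u huS : Set V) := by
    rw [coe_cons]
    exact hS.insert fun s hs _ => hadj s hs
  have := hmax _ (cons_subset.mpr ⟨huU, hSU⟩) hclique
  rw [card_cons] at this
  omega

variable [DecidableRel G.Adj]

lemma IsRegularOfDegree.two_mul_card_edgeFinset [Fintype V] {d : ℕ}
    (h : G.IsRegularOfDegree d) : 2 * #G.edgeFinset = Fintype.card V * d := by
  rw [← sum_degrees_eq_twice_card_edges]
  simp [h.degree_eq]

lemma card_sdiff_le_card_filter_not_adj [DecidableEq V] {U S : Finset V}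
    (h : ∀ u ∈ U, u ∉ S → ∃ s ∈ S, ¬ G.Adj u s) :
    #(U \ S) ≤ #{p ∈ (U \ S) ×ˢ S | ¬ G.Adj p.1 p.2} :=
  card_le_card_of_surjOn Prod.fst fun u hu => by
    obtain ⟨huU, huS⟩ := mem_sdiff.mp hu
    obtain ⟨s, hs, hus⟩ := h u huU huS
    exact ⟨(u, s), by simp [huU, huS, hs, hus], rfl⟩

lemma card_add_two_mul_card_sdiff_le_card_filter_not_adj [DecidableEq V] {U S : Finset V}
    (hSU : S ⊆ U) (h : ∀ u ∈ U, u ∉ S → ∃ s ∈ S, ¬ G.Adj u s) :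
    #U + 2 * #(U \ S) ≤ #{p ∈ U ×ˢ U | ¬ G.Adj p.1 p.2} := by
  set A := {p ∈ (U \ S) ×ˢ S | ¬ G.Adj p.1 p.2}
  have hA : #(U \ S) ≤ #A := card_sdiff_le_card_filter_not_adj h
  have hdisj : Disjoint U.diag (A ∪ A.map (Equiv.prodComm V V).toEmbedding) := by
    rw [Finset.disjoint_left]
    rintro ⟨a, b⟩
    simp +contextual [A]
  have hdisj' : Disjoint A (A.map (Equiv.prodComm V V).toEmbedding) := by
    rw [Finset.disjoint_left]
    rintro ⟨a, b⟩
    simp +contextual [A]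
  have hsub : U.diag ∪ (A ∪ A.map (Equiv.prodComm V V).toEmbedding) ⊆
      {p ∈ U ×ˢ U | ¬ G.Adj p.1 p.2} := by
    rintro ⟨a, b⟩
    simp only [A, mem_union, mem_diag, mem_filter, mem_map_equiv, mem_product, mem_sdiff]
    rintro (⟨ha, rfl⟩ | ⟨⟨⟨ha, -⟩, hb⟩, hab⟩ | ⟨⟨⟨hb, -⟩, ha⟩, hba⟩)
    · exact ⟨⟨ha, ha⟩, G.irrefl⟩
    · exact ⟨⟨ha, hSU hb⟩, hab⟩
    · exact ⟨⟨hSU ha, hb⟩, fun hab => hba hab.symm⟩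
  have := card_le_card hsub
  rw [card_union_of_disjoint hdisj, card_union_of_disjoint hdisj', card_map, diag_card] at this
  omega

lemma sum_sum_ite_adj_le {U S : Finset V} (hSU : S ⊆ U)
    (h : ∀ u ∈ U, u ∉ S → ∃ s ∈ S, ¬ G.Adj u s) :
    (∑ u ∈ U, ∑ v ∈ U, if G.Adj u v then (1 : ℝ) else 0) ≤ (#U : ℝ) ^ 2 - 3 * #U + 2 * #S := by
  classical
  have hsum : (∑ u ∈ U, ∑ v ∈ U, if G.Adj u v then (1 : ℝ) else 0) =
      #{p ∈ U ×ˢ U | G.Adj p.1 p.2} := by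
    rw [← sum_product', sum_boole]
  have hsplit : #{p ∈ U ×ˢ U | G.Adj p.1 p.2} + #{p ∈ U ×ˢ U | ¬ G.Adj p.1 p.2} = #U * #U := by
    rw [card_filter_add_card_filter_not, card_product]
  have hcount : #{p ∈ U ×ˢ U | G.Adj p.1 p.2} + #U + 2 * #(U \ S) ≤ #U ^ 2 := by
    have := card_add_two_mul_card_sdiff_le_card_filter_not_adj hSU h
    rw [sq]
    omega
  have hsdiff : (#(U \ S) : ℝ) + #S = #U := by exact_mod_cast card_sdiff_add_card_eq_card hSU
  rw [hsum]
  have : (#{p ∈ U ×ˢ U | G.Adj p.1 p.2} + #U + 2 * #(U \ S) : ℝ) ≤ #U ^ 2 := by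
    exact_mod_cast hcount
  linarith

end SimpleGraph

open SimpleGraph in
theorem clique_bound_on_setMod_general
    {V : Type*} [Fintype V] (G : SimpleGraph V) [DecidableRel G.Adj]
    (n : ℕ) (hn : Fintype.card V = n) (hn4 : 4 < n)
    (hreg : G.IsRegularOfDegree (n - 4))
    (t α : ℝ)
    (V' : Finset V) (hcard : (V'.card : ℝ) = t * n)
    (S : Finset V) (hS : S ⊆ V') (hSclique : G.IsClique (S : Set V))
    (hScard : (S.card : ℝ) = α * n)
    (hSmax : ∀ T ⊆ V', G.IsClique (T : Set V) → T.card ≤ S.card) :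
    (∑ u ∈ V', ∑ v ∈ V', (if G.Adj u v then (1 : ℝ) else 0)) / 2
        / (G.edgeFinset.card : ℝ)
      - ((∑ v ∈ V', (G.degree v : ℝ)) / (2 * (G.edgeFinset.card : ℝ))) ^ 2
      ≤ (4 * t ^ 2 + 2 * α - 3 * t) / ((n : ℝ) - 4) := by
  have hn4' : (0 : ℝ) < n - 4 := by
    rw [sub_pos]
    exact_mod_cast hn4
  have hdeg : ((n - 4 : ℕ) : ℝ) = n - 4 := by
    rw [Nat.cast_sub hn4.le]
    norm_num
  have hm : (#G.edgeFinset : ℝ) = n * (n - 4) / 2 := by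
    have := congrArg (Nat.cast : ℕ → ℝ) hreg.two_mul_card_edgeFinset
    push_cast [hn, hdeg] at this
    linarith
  have hD : ∑ v ∈ V', (G.degree v : ℝ) = t * n * (n - 4) := by
    rw [sum_congr rfl fun v _ => by rw [hreg.degree_eq, hdeg], sum_const, nsmul_eq_mul, hcard]
  have hpairs := G.sum_sum_ite_adj_le hS fun u hu huS =>
    hSclique.exists_not_adj_of_forall_card_le hS hSmax hu huS
  rw [hcard, hScard] at hpairs
  have hn0 : (n : ℝ) ≠ 0 := by positivity
  have hM : (∑ u ∈ V', ∑ v ∈ V', if G.Adj u v then (1 : ℝ) else 0) / 2 / (n * (n - 4) / 2)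
      - (t * n * (n - 4) / (2 * (n * (n - 4) / 2))) ^ 2
      = (4 * t ^ 2 + 2 * α - 3 * t) / (n - 4) + ((∑ u ∈ V', ∑ v ∈ V', if G.Adj u v then 1 else 0)
        - ((t * n) ^ 2 - 3 * (t * n) + 2 * (α * n))) / (n * (n - 4)) := by
    field_simp
    ring
  rw [hm, hD, hM]
  exact add_le_of_nonpos_right (div_nonpos_of_nonpos_of_nonneg (by linarith) (by positivity))

/-- Let `G` be an `(n−4)`-regular graph on `n` vertices, `V' ⊆ V` with `|V'| = t·n`,
and suppose the largest clique in the induced subgraph `G[V']` has `α·n` vertices.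
Then `M(V') = m_{V'}/m − (D_{V'}/(2m))² ≤ (4t² + 2α − 3t)/(n−4)`, where `m_{V'}` is
the number of edges inside `V'` and `D_{V'}` the sum of degrees of vertices of `V'`. -/
theorem clique_bound_on_setMod
    {V : Type*} [Fintype V] [DecidableEq V] (G : SimpleGraph V) [DecidableRel G.Adj]
    (n : ℕ) (hn : Fintype.card V = n) (hn4 : 4 < n)
    (hreg : G.IsRegularOfDegree (n - 4))
    (t α : ℝ)
    (V' : Finset V) (hcard : (V'.card : ℝ) = t * n)
    (S : Finset V) (hS : S ⊆ V') (hSclique : G.IsClique (S : Set V))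
    (hScard : (S.card : ℝ) = α * n)
    (hSmax : ∀ T ⊆ V', G.IsClique (T : Set V) → T.card ≤ S.card) :
    (∑ u ∈ V', ∑ v ∈ V', (if G.Adj u v then (1 : ℝ) else 0)) / 2
        / (G.edgeFinset.card : ℝ)
      - ((∑ v ∈ V', (G.degree v : ℝ)) / (2 * (G.edgeFinset.card : ℝ))) ^ 2
      ≤ (4 * t ^ 2 + 2 * α - 3 * t) / ((n : ℝ) - 4) :=
  clique_bound_on_setMod_general G n hn hn4 hreg t α V' hcard S hS hSclique hScard hSmax
end
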